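/- On the doubly infinite Sierpinski gasket graph SG, for n = 2^k the closed ball of radius n centered at the origin o has cardinality 3^{k+1} + 2. -/

import Mathlib

open Finset

attribute [local instance] Classical.propDecidable

namespace IDLA

noncomputable section

/-- Translate a set of points in the plane. -/
def trSet (a : ℝ × ℝ) (S : Set (ℝ × ℝ)) : Set (ℝ × ℝ) := (fun p => a + p) '' S

/-- Vertices of the level-`n` Sierpinski gasket graph. -/
def gasketV : ℕ → Set (ℝ × ℝ)
  | 0 => {(0, 0), (1, 0), (1 / 2, Real.sqrt 3 / 2)}
  | n + 1 =>
      gasketV n ∪ trSet ((2 : ℝ) ^ n, 0) (gasketV n) ∪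
        trSet ((2 : ℝ) ^ n / 2, (2 : ℝ) ^ n / 2 * Real.sqrt 3) (gasketV n)

/-- Edges of the level-`n` Sierpinski gasket graph. -/
def gasketE : ℕ → Set ((ℝ × ℝ) × (ℝ × ℝ))
  | 0 => {((0, 0), (1, 0)), ((0, 0), (1 / 2, Real.sqrt 3 / 2)),
      ((1, 0), (1 / 2, Real.sqrt 3 / 2))}
  | n + 1 =>
      gasketE n ∪
        (fun e => (((2 : ℝ) ^ n, 0) + e.1, ((2 : ℝ) ^ n, 0) + e.2)) '' gasketE n ∪
        (fun e => (((2 : ℝ) ^ n / 2, (2 : ℝ) ^ n / 2 * Real.sqrt 3) + e.1,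
          ((2 : ℝ) ^ n / 2, (2 : ℝ) ^ n / 2 * Real.sqrt 3) + e.2)) '' gasketE n

/-- Vertex set of the doubly infinite Sierpinski gasket graph. -/
def SGV : Set (ℝ × ℝ) := (⋃ n, gasketV n) ∪ (-(⋃ n, gasketV n))

/-- Edge set of the doubly infinite Sierpinski gasket graph. -/
def SGE : Set ((ℝ × ℝ) × (ℝ × ℝ)) :=
  (⋃ n, gasketE n) ∪ ((fun e => (-e.1, -e.2)) '' ⋃ n, gasketE n)

/-- The doubly infinite Sierpinski gasket graph `SG`. -/
def SGGraph : SimpleGraph SGV :=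
  SimpleGraph.fromRel fun x y => ((x : ℝ × ℝ), (y : ℝ × ℝ)) ∈ SGE

/-- The origin `o = (0,0)` of `SG`. -/
def oSG : SGV :=
  ⟨(0, 0), Or.inl (Set.mem_iUnion.mpr ⟨0, by simp [gasketV]⟩)⟩

end

/-!
Write points in the basis `(1, 0)`, `(1/2, √3/2)` of edge directions, with coordinates `(a, b)`.
The level-`n` triangle `gasketV n` lies in `{0 ≤ a, 0 ≤ b, a + b ≤ 2 ^ n}`, and the three copies
of it inside level `n + 1` pairwise meet in a single corner, so `2 |gasketV n| = 3 ^ (n + 1) + 3`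
by inclusion–exclusion; the two triangles `gasketV k` and `-gasketV k` meet only in `o`.

The ball of radius `2 ^ k` is exactly `gasketV k ∪ -gasketV k`. Every vertex of `gasketV n` is
within `2 ^ n` of each corner: inside level `n + 1`, go to the corner that the vertex's copy
shares with the copy containing the target corner. Conversely `a + b` changes by at most one along
an edge and is odd under negation, so `|a + b|` is a lower bound for the distance to `o`, and the
one-sided gasket meets `{a + b ≤ 2 ^ k}` exactly in `gasketV k`.
-/

lemma _root_.SimpleGraph.Hom.edist_le {V W : Type*} {G : SimpleGraph V} {H : SimpleGraph W}
    (f : G →g H) (u v : V) : H.edist (f u) (f v) ≤ G.edist u v := by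
  by_cases h : G.Reachable u v
  · obtain ⟨w, hw⟩ := h.exists_walk_length_eq_edist
    rw [← hw, ← w.length_map f]
    exact SimpleGraph.edist_le _
  · rw [SimpleGraph.edist_eq_top_of_not_reachable h]
    exact le_top

lemma _root_.SimpleGraph.Walk.support_subset_of_closed {V : Type*} {G : SimpleGraph V}
    {s : Set V} (hs : ∀ u v, u ∈ s → G.Adj u v → v ∈ s) {u v : V} (w : G.Walk u v)
    (hu : u ∈ s) : ∀ x ∈ w.support, x ∈ s := by
  induction w with
  | nil => simpa using hu
  | cons h w ih =>
    simp only [SimpleGraph.Walk.support_cons, List.mem_cons, forall_eq_or_imp]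
    exact ⟨hu, ih (hs _ _ hu h)⟩

lemma _root_.SimpleGraph.edist_induce_le_of_closed {V : Type*} {G : SimpleGraph V} {s : Set V}
    (hs : ∀ u v, u ∈ s → G.Adj u v → v ∈ s) (u v : s) :
    (G.induce s).edist u v ≤ G.edist u v := by
  by_cases h : G.Reachable u v
  · obtain ⟨w, hw⟩ := h.exists_walk_length_eq_edist
    have hw' := w.support_subset_of_closed hs u.2
    have hlen : (w.induce s hw').length = w.length := by
      rw [← SimpleGraph.Walk.length_map (SimpleGraph.Embedding.induce s).toHom, w.map_induce]
      rfl
    rw [← hw, ← hlen]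
    exact SimpleGraph.edist_le _
  · rw [SimpleGraph.edist_eq_top_of_not_reachable h]
    exact le_top

lemma _root_.SimpleGraph.Walk.abs_sub_le_length {V : Type*} {G : SimpleGraph V} (f : V → ℝ)
    (hf : ∀ u v, G.Adj u v → |f u - f v| ≤ 1) {u v : V} (w : G.Walk u v) :
    |f u - f v| ≤ w.length := by
  induction w with
  | nil => simp
  | @cons a b c h w ih =>
    rw [SimpleGraph.Walk.length_cons, Nat.cast_succ]
    linarith [abs_sub_le (f a) (f b) (f c), hf a b h]

lemma _root_.SimpleGraph.Reachable.abs_sub_le_dist {V : Type*} {G : SimpleGraph V} (f : V → ℝ)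
    (hf : ∀ u v, G.Adj u v → |f u - f v| ≤ 1) {u v : V} (h : G.Reachable u v) :
    |f u - f v| ≤ G.dist u v := by
  obtain ⟨w, hw⟩ := h.exists_walk_length_eq_dist
  exact hw ▸ w.abs_sub_le_length f hf

noncomputable def cornerR (n : ℕ) : ℝ × ℝ := ((2 : ℝ) ^ n, 0)

noncomputable def cornerT (n : ℕ) : ℝ × ℝ := ((2 : ℝ) ^ n / 2, (2 : ℝ) ^ n / 2 * √3)

/-- The corners of the level-`n` triangle, which are also the offsets of the three copies of
`gasketV n` that make up `gasketV (n + 1)`. -/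
def corners (n : ℕ) : Set (ℝ × ℝ) := {0, cornerR n, cornerT n}

lemma cornerR_succ (n : ℕ) : cornerR (n + 1) = cornerR n + cornerR n := by
  simp only [cornerR, Prod.mk_add_mk, add_zero, pow_succ]; ring_nf

lemma cornerT_succ (n : ℕ) : cornerT (n + 1) = cornerT n + cornerT n := by
  simp only [cornerT, Prod.mk_add_mk, pow_succ, Prod.mk.injEq]; constructor <;> ring

lemma corners_succ (n : ℕ) : corners (n + 1) = (fun t ↦ t + t) '' corners n := by
  simp [corners, Set.image_insert_eq, cornerR_succ, cornerT_succ]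

lemma gasketV_zero : gasketV 0 = corners 0 := by
  simp only [gasketV, corners, cornerR, cornerT, Prod.zero_eq_mk]
  norm_num [div_mul_eq_mul_div]

lemma gasketV_succ (n : ℕ) : gasketV (n + 1) =
    gasketV n ∪ trSet (cornerR n) (gasketV n) ∪ trSet (cornerT n) (gasketV n) := rfl

lemma mem_gasketV_succ {n : ℕ} {p : ℝ × ℝ} :
    p ∈ gasketV (n + 1) ↔ ∃ t ∈ corners n, ∃ q ∈ gasketV n, t + q = p := by
  simp only [gasketV, trSet, corners, cornerR, cornerT, Set.mem_union, Set.mem_image,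
    Set.mem_insert_iff, Set.mem_singleton_iff, or_and_right, exists_or, exists_eq_left,
    zero_add, exists_eq_right, or_assoc]

lemma mem_gasketE_succ {n : ℕ} {e : (ℝ × ℝ) × (ℝ × ℝ)} :
    e ∈ gasketE (n + 1) ↔ ∃ t ∈ corners n, ∃ f ∈ gasketE n, (t + f.1, t + f.2) = e := by
  simp only [gasketE, corners, cornerR, cornerT, Set.mem_union, Set.mem_image,
    Set.mem_insert_iff, Set.mem_singleton_iff, or_and_right, exists_or, exists_eq_left,
    zero_add, exists_eq_right, or_assoc]

lemma gasketV_mono : Monotone gasketV :=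
  monotone_nat_of_le_succ fun _ _ hp ↦ Or.inl (Or.inl hp)

lemma corners_subset_gasketV (n : ℕ) : corners n ⊆ gasketV n := by
  induction n with
  | zero => rw [gasketV_zero]
  | succ n ih =>
    rw [corners_succ]
    rintro _ ⟨t, ht, rfl⟩
    exact mem_gasketV_succ.mpr ⟨t, ht, t, ih ht, rfl⟩

lemma zero_mem_gasketV (n : ℕ) : (0 : ℝ × ℝ) ∈ gasketV n :=
  corners_subset_gasketV n (by simp [corners])

lemma cornerR_mem_gasketV (n : ℕ) : cornerR n ∈ gasketV n :=
  corners_subset_gasketV n (by simp [corners])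

lemma cornerT_mem_gasketV (n : ℕ) : cornerT n ∈ gasketV n :=
  corners_subset_gasketV n (by simp [corners])

/-- `(coordA p, coordB p)` are the coordinates of `p` in the basis `(1, 0)`, `(1/2, √3/2)`. -/
noncomputable def coordA : ℝ × ℝ →+ ℝ :=
  AddMonoidHom.mk' (fun p ↦ p.1 - p.2 / √3) fun p q ↦ by
    simp only [Prod.fst_add, Prod.snd_add]; ring

noncomputable def coordB : ℝ × ℝ →+ ℝ :=
  AddMonoidHom.mk' (fun p ↦ 2 * p.2 / √3) fun p q ↦ by simp only [Prod.snd_add]; ring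

noncomputable def level : ℝ × ℝ →+ ℝ := coordA + coordB

lemma level_apply (p : ℝ × ℝ) : level p = coordA p + coordB p := rfl

lemma eq_of_coordA_eq_of_coordB_eq {p q : ℝ × ℝ} (hA : coordA p = coordA q)
    (hB : coordB p = coordB q) : p = q := by
  have h3 : √3 ≠ 0 := by positivity
  simp only [coordA, coordB, AddMonoidHom.mk'_apply] at hA hB
  have h2 : p.2 = q.2 := by field_simp at hB; linarith
  exact Prod.ext (by rw [h2] at hA; linarith) h2

@[simp] lemma coordA_cornerR (n : ℕ) : coordA (cornerR n) = 2 ^ n := by simp [coordA, cornerR]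

@[simp] lemma coordB_cornerR (n : ℕ) : coordB (cornerR n) = 0 := by simp [coordB, cornerR]

@[simp] lemma coordA_cornerT (n : ℕ) : coordA (cornerT n) = 0 := by simp [coordA, cornerT]

@[simp] lemma coordB_cornerT (n : ℕ) : coordB (cornerT n) = 2 ^ n := by
  simp [coordB, cornerT]; field_simp

lemma coords_of_mem_gasketV {n : ℕ} {p : ℝ × ℝ} (hp : p ∈ gasketV n) :
    0 ≤ coordA p ∧ 0 ≤ coordB p ∧ coordA p + coordB p ≤ 2 ^ n := by
  induction n generalizing p with
  | zero =>
    rw [gasketV_zero] at hp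
    rcases hp with rfl | rfl | rfl <;> simp
  | succ n ih =>
    obtain ⟨t, ht, q, hq, rfl⟩ := mem_gasketV_succ.mp hp
    obtain ⟨hA, hB, hAB⟩ := ih hq
    have : (0 : ℝ) ≤ 2 ^ n := by positivity
    rcases ht with rfl | rfl | rfl <;>
      simp only [map_add, map_zero, coordA_cornerR, coordB_cornerR, coordA_cornerT,
        coordB_cornerT, pow_succ] <;>
      refine ⟨?_, ?_, ?_⟩ <;> linarith

lemma eq_zero_of_mem_gasketV {n : ℕ} {p : ℝ × ℝ} (hp : p ∈ gasketV n)
    (h : coordA p + coordB p ≤ 0) : p = 0 := by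
  obtain ⟨hA, hB, -⟩ := coords_of_mem_gasketV hp
  exact eq_of_coordA_eq_of_coordB_eq (by simp; linarith) (by simp; linarith)

lemma eq_cornerR_of_mem_gasketV {n : ℕ} {p : ℝ × ℝ} (hp : p ∈ gasketV n)
    (h : 2 ^ n ≤ coordA p) : p = cornerR n := by
  obtain ⟨hA, hB, hAB⟩ := coords_of_mem_gasketV hp
  exact eq_of_coordA_eq_of_coordB_eq (by simp; linarith) (by simp; linarith)

lemma gasketV_inter_trSet_cornerR (n : ℕ) :
    gasketV n ∩ trSet (cornerR n) (gasketV n) = {cornerR n} := by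
  refine Set.Subset.antisymm ?_ ?_
  · rintro _ ⟨hp, q, hq, rfl⟩
    have hAB := (coords_of_mem_gasketV hp).2.2
    simp only [map_add, coordA_cornerR, coordB_cornerR] at hAB
    simp [eq_zero_of_mem_gasketV hq (by linarith)]
  · rintro _ rfl
    exact ⟨cornerR_mem_gasketV n, 0, zero_mem_gasketV n, add_zero _⟩

lemma union_inter_trSet_cornerT (n : ℕ) :
    (gasketV n ∪ trSet (cornerR n) (gasketV n)) ∩ trSet (cornerT n) (gasketV n) =
      {cornerT n, cornerR n + cornerT n} := by
  refine Set.Subset.antisymm ?_ ?_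
  · rintro _ ⟨hp | ⟨q, hq, rfl⟩, r, hr, hrp⟩
    · subst hrp
      have hAB := (coords_of_mem_gasketV hp).2.2
      simp only [map_add, coordA_cornerT, coordB_cornerT] at hAB
      simp [eq_zero_of_mem_gasketV hr (by linarith)]
    · have hA := congrArg coordA hrp
      simp only [map_add, coordA_cornerR, coordA_cornerT] at hA
      simp [← hrp, eq_cornerR_of_mem_gasketV hr (by linarith [(coords_of_mem_gasketV hq).1]),
        add_comm]
  · rintro _ (rfl | rfl)
    · exact ⟨Or.inl (cornerT_mem_gasketV n), 0, zero_mem_gasketV n, add_zero _⟩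
    · exact ⟨Or.inr ⟨_, cornerT_mem_gasketV n, rfl⟩, _, cornerR_mem_gasketV n, add_comm _ _⟩

lemma gasketV_finite (n : ℕ) : (gasketV n).Finite := by
  induction n with
  | zero => exact ((Set.finite_singleton _).insert _).insert _
  | succ n ih => exact (ih.union (ih.image _)).union (ih.image _)

lemma ncard_trSet (a : ℝ × ℝ) (S : Set (ℝ × ℝ)) : (trSet a S).ncard = S.ncard :=
  Set.ncard_image_of_injective _ (add_right_injective a)

lemma two_mul_ncard_gasketV (n : ℕ) : 2 * (gasketV n).ncard = 3 ^ (n + 1) + 3 := by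
  induction n with
  | zero =>
    rw [gasketV_zero, corners, Set.ncard_insert_of_notMem, Set.ncard_pair]
    all_goals simp [cornerR, cornerT, Prod.ext_iff]
  | succ n ih =>
    have hfin := gasketV_finite n
    have hfinR : (trSet (cornerR n) (gasketV n)).Finite := hfin.image _
    have hfinT : (trSet (cornerT n) (gasketV n)).Finite := hfin.image _
    have hAB := Set.ncard_union_add_ncard_inter _ _ hfin hfinR
    have hABC := Set.ncard_union_add_ncard_inter _ _ (hfin.union hfinR) hfinT
    have hRT : cornerT n ≠ cornerR n + cornerT n := by
      simp [cornerR, cornerT, Prod.ext_iff]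
    rw [gasketV_inter_trSet_cornerR] at hAB
    rw [union_inter_trSet_cornerT, Set.ncard_pair hRT] at hABC
    rw [gasketV_succ]
    simp only [ncard_trSet, Set.ncard_singleton] at hAB hABC
    rw [pow_succ]
    omega

def doubleGasketV (k : ℕ) : Set (ℝ × ℝ) := gasketV k ∪ -gasketV k

lemma gasketV_inter_neg (k : ℕ) : gasketV k ∩ -gasketV k = {0} := by
  refine Set.Subset.antisymm ?_ ?_
  · rintro p ⟨hp, hp'⟩
    obtain ⟨hA, hB, -⟩ := coords_of_mem_gasketV hp
    obtain ⟨hA', hB', -⟩ := coords_of_mem_gasketV (Set.mem_neg.mp hp')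
    simp only [map_neg] at hA' hB'
    exact eq_zero_of_mem_gasketV hp (by linarith)
  · rintro _ rfl
    exact ⟨zero_mem_gasketV k, by simpa using zero_mem_gasketV k⟩

lemma ncard_doubleGasketV (k : ℕ) : (doubleGasketV k).ncard = 3 ^ (k + 1) + 2 := by
  have hfin := gasketV_finite k
  have h := Set.ncard_union_add_ncard_inter _ _ hfin hfin.neg
  rw [gasketV_inter_neg, Set.ncard_singleton, Set.ncard_neg] at h
  have := two_mul_ncard_gasketV k
  rw [doubleGasketV]
  omega

lemma exists_mem_doubleGasketV {p : ℝ × ℝ} (hp : p ∈ SGV) : ∃ n, p ∈ doubleGasketV n := by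
  rcases hp with hp | hp
  · obtain ⟨n, hn⟩ := Set.mem_iUnion.mp hp
    exact ⟨n, Or.inl hn⟩
  · obtain ⟨n, hn⟩ := Set.mem_iUnion.mp (Set.mem_neg.mp hp)
    exact ⟨n, Or.inr hn⟩

lemma doubleGasketV_subset_SGV (k : ℕ) : doubleGasketV k ⊆ SGV := by
  rintro p (hp | hp)
  · exact Or.inl (Set.mem_iUnion_of_mem k hp)
  · exact Or.inr (Set.mem_neg.mpr (Set.mem_iUnion_of_mem k hp))

noncomputable def gasketGraph (n : ℕ) : SimpleGraph (ℝ × ℝ) :=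
  SimpleGraph.fromRel fun p q ↦ (p, q) ∈ gasketE n

def gasketGraph.translate {n : ℕ} {t : ℝ × ℝ} (ht : t ∈ corners n) :
    gasketGraph n →g gasketGraph (n + 1) where
  toFun := (t + ·)
  map_rel' {p q} h := by
    rw [gasketGraph, SimpleGraph.fromRel_adj] at h ⊢
    refine ⟨by simpa using h.1, h.2.imp ?_ ?_⟩ <;>
      exact fun he ↦ mem_gasketE_succ.mpr ⟨t, ht, _, he, rfl⟩

lemma gasketGraph_zero_edist_le_one {p q : ℝ × ℝ} (hp : p ∈ gasketV 0) (hq : q ∈ gasketV 0) :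
    (gasketGraph 0).edist p q ≤ 1 := by
  rw [SimpleGraph.edist_le_one_iff_adj_or_eq, gasketGraph, SimpleGraph.fromRel_adj]
  rw [gasketV_zero] at hp hq
  rcases hp with rfl | rfl | rfl <;> rcases hq with rfl | rfl | rfl <;>
    simp [gasketE, cornerR, cornerT, Prod.ext_iff, inv_mul_eq_div]

lemma gasketGraph_edist_le {n : ℕ} {p c : ℝ × ℝ} (hp : p ∈ gasketV n) (hc : c ∈ corners n) :
    (gasketGraph n).edist p c ≤ 2 ^ n := by
  induction n generalizing p c with
  | zero => simpa using gasketGraph_zero_edist_le_one hp (corners_subset_gasketV 0 hc)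
  | succ n ih =>
    obtain ⟨t, ht, q, hq, rfl⟩ := mem_gasketV_succ.mp hp
    rw [corners_succ] at hc
    obtain ⟨s, hs, rfl⟩ := hc
    calc (gasketGraph (n + 1)).edist (t + q) (s + s)
        ≤ (gasketGraph (n + 1)).edist (t + q) (t + s) +
            (gasketGraph (n + 1)).edist (s + t) (s + s) := by
          rw [add_comm s t]; exact SimpleGraph.edist_triangle
      _ ≤ (gasketGraph n).edist q s + (gasketGraph n).edist t s :=
          add_le_add (SimpleGraph.Hom.edist_le (gasketGraph.translate ht) q s)
            (SimpleGraph.Hom.edist_le (gasketGraph.translate hs) t s)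
      _ ≤ 2 ^ n + 2 ^ n := add_le_add (ih hq hs) (ih (corners_subset_gasketV n ht) hs)
      _ = 2 ^ (n + 1) := by rw [pow_succ, mul_two]

lemma mem_gasketV_of_mem_gasketE {n : ℕ} {e : (ℝ × ℝ) × (ℝ × ℝ)} (he : e ∈ gasketE n) :
    e.1 ∈ gasketV n ∧ e.2 ∈ gasketV n := by
  induction n generalizing e with
  | zero => rcases he with rfl | rfl | rfl <;> simp [gasketV]
  | succ n ih =>
    obtain ⟨t, ht, f, hf, rfl⟩ := mem_gasketE_succ.mp he
    exact ⟨mem_gasketV_succ.mpr ⟨t, ht, _, (ih hf).1, rfl⟩,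
      mem_gasketV_succ.mpr ⟨t, ht, _, (ih hf).2, rfl⟩⟩

lemma mem_SGV_of_mem_SGE {p q : ℝ × ℝ} (h : (p, q) ∈ SGE) : p ∈ SGV ∧ q ∈ SGV := by
  rcases h with h | ⟨e, he, hpq⟩
  · obtain ⟨n, hn⟩ := Set.mem_iUnion.mp h
    obtain ⟨hp, hq⟩ := mem_gasketV_of_mem_gasketE hn
    exact ⟨Or.inl (Set.mem_iUnion_of_mem n hp), Or.inl (Set.mem_iUnion_of_mem n hq)⟩
  · obtain ⟨n, hn⟩ := Set.mem_iUnion.mp he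
    obtain ⟨hp, hq⟩ := mem_gasketV_of_mem_gasketE hn
    simp only [Prod.mk.injEq] at hpq
    obtain ⟨rfl, rfl⟩ := hpq
    exact ⟨Or.inr (by simpa using Set.mem_iUnion_of_mem n hp),
      Or.inr (by simpa using Set.mem_iUnion_of_mem n hq)⟩

lemma neg_mem_SGE {p q : ℝ × ℝ} (h : (p, q) ∈ SGE) : (-p, -q) ∈ SGE := by
  rcases h with h | ⟨e, he, hpq⟩
  · exact Or.inr ⟨(p, q), h, rfl⟩
  · simp only [Prod.mk.injEq] at hpq
    obtain ⟨rfl, rfl⟩ := hpq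
    rw [neg_neg, neg_neg]
    exact Or.inl he

/-- `SG` as a graph on the whole plane, on which negation acts by a graph homomorphism. -/
noncomputable def sgPlaneGraph : SimpleGraph (ℝ × ℝ) :=
  SimpleGraph.fromRel fun p q ↦ (p, q) ∈ SGE

lemma SGGraph_eq_induce : SGGraph = sgPlaneGraph.induce SGV := by
  ext x y
  simp [SGGraph, sgPlaneGraph, Subtype.ext_iff]

lemma mem_SGV_of_sgPlaneGraph_adj {p q : ℝ × ℝ} (h : sgPlaneGraph.Adj p q) : q ∈ SGV := by
  rw [sgPlaneGraph, SimpleGraph.fromRel_adj] at h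
  rcases h.2 with h | h
  exacts [(mem_SGV_of_mem_SGE h).2, (mem_SGV_of_mem_SGE h).1]

lemma gasketGraph_le_sgPlaneGraph (n : ℕ) : gasketGraph n ≤ sgPlaneGraph := by
  intro p q h
  rw [gasketGraph, SimpleGraph.fromRel_adj] at h
  rw [sgPlaneGraph, SimpleGraph.fromRel_adj]
  exact ⟨h.1, h.2.imp (fun h ↦ Or.inl (Set.mem_iUnion_of_mem n h))
    (fun h ↦ Or.inl (Set.mem_iUnion_of_mem n h))⟩

@[simps]
noncomputable def sgPlaneGraph.neg : sgPlaneGraph →g sgPlaneGraph where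
  toFun := Neg.neg
  map_rel' {p q} h := by
    rw [sgPlaneGraph, SimpleGraph.fromRel_adj] at h ⊢
    exact ⟨neg_injective.ne h.1, h.2.imp neg_mem_SGE neg_mem_SGE⟩

lemma SGGraph_edist_oSG_le {k : ℕ} {y : SGV} (hy : y.val ∈ doubleGasketV k) :
    SGGraph.edist oSG y ≤ 2 ^ k := by
  have hpos : ∀ p ∈ gasketV k, sgPlaneGraph.edist 0 p ≤ 2 ^ k := fun p hp ↦
    calc sgPlaneGraph.edist 0 p ≤ (gasketGraph k).edist p 0 := by
          rw [SimpleGraph.edist_comm]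
          exact SimpleGraph.edist_anti (gasketGraph_le_sgPlaneGraph k)
      _ ≤ 2 ^ k := gasketGraph_edist_le hp (by simp [corners])
  rw [SGGraph_eq_induce]
  refine (SimpleGraph.edist_induce_le_of_closed (fun _ _ _ h ↦ mem_SGV_of_sgPlaneGraph_adj h)
    oSG y).trans ?_
  change sgPlaneGraph.edist 0 y.val ≤ 2 ^ k
  rcases hy with hy | hy
  · exact hpos _ hy
  · simpa using (SimpleGraph.Hom.edist_le sgPlaneGraph.neg 0 (-y.val)).trans (hpos _ hy)

lemma SGGraph_reachable_oSG (y : SGV) : SGGraph.Reachable oSG y := by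
  obtain ⟨n, hn⟩ := exists_mem_doubleGasketV y.2
  exact SimpleGraph.reachable_of_edist_ne_top
    (ne_top_of_le_ne_top (by simp) (SGGraph_edist_oSG_le hn))

lemma abs_level_sub_le_one_of_mem_gasketE {n : ℕ} {e : (ℝ × ℝ) × (ℝ × ℝ)}
    (he : e ∈ gasketE n) : |level e.1 - level e.2| ≤ 1 := by
  induction n generalizing e with
  | zero =>
    have h3 : √3 ≠ 0 := by positivity
    rcases he with rfl | rfl | rfl <;> simp [level, coordA, coordB] <;> field_simp <;> norm_num
  | succ n ih =>
    obtain ⟨t, -, f, hf, rfl⟩ := mem_gasketE_succ.mp he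
    simpa only [map_add, add_sub_add_left_eq_sub] using ih hf

lemma abs_level_sub_le_one_of_mem_SGE {p q : ℝ × ℝ} (h : (p, q) ∈ SGE) :
    |level p - level q| ≤ 1 := by
  rcases h with h | ⟨e, he, hpq⟩
  · obtain ⟨n, hn⟩ := Set.mem_iUnion.mp h
    exact abs_level_sub_le_one_of_mem_gasketE hn
  · obtain ⟨n, hn⟩ := Set.mem_iUnion.mp he
    simp only [Prod.mk.injEq] at hpq
    obtain ⟨rfl, rfl⟩ := hpq
    rw [map_neg, map_neg, neg_sub_neg, abs_sub_comm]
    exact abs_level_sub_le_one_of_mem_gasketE hn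

lemma abs_level_le_SGGraph_dist (y : SGV) : |level y.val| ≤ SGGraph.dist oSG y := by
  have hlip := (SGGraph_reachable_oSG y).abs_sub_le_dist (fun x ↦ level x.val) fun u v huv ↦ by
    rw [SGGraph, SimpleGraph.fromRel_adj] at huv
    rcases huv.2 with h | h
    exacts [abs_level_sub_le_one_of_mem_SGE h,
      abs_sub_comm (level v.val) _ ▸ abs_level_sub_le_one_of_mem_SGE h]
  have ho : level oSG.val = 0 := by simp [oSG, level, coordA, coordB]
  rwa [ho, zero_sub, abs_neg] at hlip

lemma mem_gasketV_of_level_le {n k : ℕ} {p : ℝ × ℝ} (hp : p ∈ gasketV n)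
    (h : level p ≤ 2 ^ k) : p ∈ gasketV k := by
  induction n generalizing p with
  | zero => exact gasketV_mono (Nat.zero_le k) hp
  | succ n ih =>
    rcases le_or_gt (n + 1) k with hnk | hkn
    · exact gasketV_mono hnk hp
    obtain ⟨t, ht, q, hq, rfl⟩ := mem_gasketV_succ.mp hp
    obtain ⟨hA, hB, -⟩ := coords_of_mem_gasketV hq
    rcases ht with rfl | ht
    · exact ih (by simpa using hq) (by simpa using h)
    have hlevel : level t = 2 ^ n := by rcases ht with rfl | rfl <;> simp [level_apply]
    rw [map_add, hlevel, level_apply] at h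
    obtain rfl : n = k := by
      have hnk : (2 : ℝ) ^ n ≤ 2 ^ k := by linarith
      have := (pow_le_pow_iff_right₀ (by norm_num : (1 : ℝ) < 2)).mp hnk
      omega
    rw [eq_zero_of_mem_gasketV hq (by linarith), add_zero]
    exact corners_subset_gasketV n (Or.inr ht)

lemma mem_doubleGasketV_of_abs_level_le {k : ℕ} {p : ℝ × ℝ} (hp : p ∈ SGV)
    (h : |level p| ≤ 2 ^ k) : p ∈ doubleGasketV k := by
  rw [abs_le] at h
  rcases hp with hp | hp
  · obtain ⟨n, hn⟩ := Set.mem_iUnion.mp hp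
    exact Or.inl (mem_gasketV_of_level_le hn h.2)
  · obtain ⟨n, hn⟩ := Set.mem_iUnion.mp (Set.mem_neg.mp hp)
    exact Or.inr (mem_gasketV_of_level_le hn (by rw [map_neg]; linarith))

lemma SGGraph_dist_oSG_le_iff {k : ℕ} {y : SGV} :
    SGGraph.dist oSG y ≤ 2 ^ k ↔ y.val ∈ doubleGasketV k :=
  ⟨fun h ↦ mem_doubleGasketV_of_abs_level_le y.2
      ((abs_level_le_SGGraph_dist y).trans (by exact_mod_cast h)),
    fun h ↦ ENat.toNat_le_of_le_natCast (by exact_mod_cast SGGraph_edist_oSG_le h)⟩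

/-- On the doubly infinite Sierpinski gasket graph, for `n = 2^k` the closed ball of radius
`n` centered at the origin has cardinality `3^{k+1} + 2`. -/
theorem closed_ball_card (k : ℕ) :
    Set.ncard {y : SGV | SGGraph.dist oSG y ≤ 2 ^ k} = 3 ^ (k + 1) + 2 := by
  have hball : {y : SGV | SGGraph.dist oSG y ≤ 2 ^ k} = Subtype.val ⁻¹' doubleGasketV k :=
    Set.ext fun _ ↦ SGGraph_dist_oSG_le_iff
  rw [hball, Set.ncard_preimage_of_injective_subset_range Subtype.val_injective
    (by simpa using doubleGasketV_subset_SGV k), ncard_doubleGasketV]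

end IDLA
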